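/- Let G = (V,E) be a finite simple graph and let R be a 3-ruling edge set of G. For i ∈ ℕ let E_i = { e ∈ E : dist(e,R) = i }. Let c be a function defined on exactly those vertices v that are incident to at least one edge of E₂ and at least one edge of E₃, assigning to each such v an edge c(v) ∈ E₂ incident to v; call the edges in the image of c candidate edges. Let a be a function defined on exactly those vertices u that are incident to at least one candidate edge and to at least one edge of E₁, assigning to each such u a candidate edge a(u) incident to u, and let I be the image of a. Then R ∪ I is a 2-ruling edge set of G. -/

import Mathlib

open SimpleGraph


/-- The line graph of `G` on the type `Sym2 V`: two distinct edges of `G` are adjacent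
iff they share an endpoint. Elements of `Sym2 V` that are not edges of `G` are isolated. -/
def lineG {V : Type*} (G : SimpleGraph V) : SimpleGraph (Sym2 V) where
  Adj e f := e ≠ f ∧ e ∈ G.edgeSet ∧ f ∈ G.edgeSet ∧ ∃ v, v ∈ e ∧ v ∈ f
  symm := by
    constructor
    rintro e f ⟨hne, he, hf, v, hv1, hv2⟩
    exact ⟨hne.symm, hf, he, v, hv2, hv1⟩
  loopless := by
    constructor
    rintro e ⟨h, -⟩
    exact h rfl

/-- Line-graph distance between two edges, `∞` if not connected. -/
noncomputable def edistE {V : Type*} (G : SimpleGraph V) (e f : Sym2 V) : ℕ∞ :=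
  (lineG G).edist e f

/-- Line-graph distance from an edge to a set of edges; `∞` if the set is empty. -/
noncomputable def edistSet {V : Type*} (G : SimpleGraph V) (e : Sym2 V)
    (R : Set (Sym2 V)) : ℕ∞ :=
  ⨅ f ∈ R, edistE G e f

/-- `R` is an `(α,β)`-ruling set of `G`: any two distinct nodes of `R` are at distance
at least `α` and every node is at distance at most `β` from some node of `R`. -/
def IsRulingSet {V : Type*} (G : SimpleGraph V) (α β : ℕ) (R : Set V) : Prop :=
  (∀ u ∈ R, ∀ v ∈ R, u ≠ v → (α : ℕ∞) ≤ G.edist u v) ∧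
  (∀ v : V, ∃ u ∈ R, G.edist v u ≤ (β : ℕ∞))

/-- `F` is an `(α,β)`-ruling edge set of `G`: `F` consists of edges of `G`, any two
distinct edges of `F` are at line-graph distance at least `α`, and every edge of `G`
is at line-graph distance at most `β` from some edge of `F`. -/
def IsRulingEdgeSet {V : Type*} (G : SimpleGraph V) (α β : ℕ) (F : Set (Sym2 V)) : Prop :=
  F ⊆ G.edgeSet ∧
  (∀ e ∈ F, ∀ f ∈ F, e ≠ f → (α : ℕ∞) ≤ edistE G e f) ∧
  (∀ e ∈ G.edgeSet, ∃ f ∈ F, edistE G e f ≤ (β : ℕ∞))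

/-- `F` is a `(d,r)`-edge-kernel of `G`: every vertex is incident to at most `d`
edges of `F` and every edge of `G` is at line-graph distance at most `r` from `F`. -/
def IsEdgeKernel {V : Type*} (G : SimpleGraph V) (d r : ℕ) (F : Set (Sym2 V)) : Prop :=
  F ⊆ G.edgeSet ∧
  (∀ v : V, {e ∈ F | v ∈ e}.ncard ≤ d) ∧
  (∀ e ∈ G.edgeSet, ∃ f ∈ F, edistE G e f ≤ (r : ℕ∞))

/-!
Edges at distance at most `2` from `R` are already covered by `R`, so only the layer `E₃`
matters. An edge `e ∈ E₃` meets an edge of `E₂` at a vertex `v`, which is then a candidate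
vertex; the candidate edge `c v ∈ E₂` meets an edge of `E₁` at a vertex `u`, which then
accepts `a u ∋ u`; so `e, c v, a u` is a walk of length `2` in the line graph.

Since `I ⊆ E₂`, edges of `I` are at distance `2` from `R`. Distances to `R` of edges sharing a
vertex differ by at most one, so no vertex is incident to both `E₁` and `E₃`, i.e. no vertex
is both a candidate vertex and an accepting one. Each accepted edge `a u = c v` is `s(u, v)`
with `u` accepting and `v` a candidate vertex, so two accepted edges sharing a vertex share it
in the same role, and coincide.
-/

lemma SimpleGraph.two_le_edist {V : Type*} {G : SimpleGraph V} {u v : V} (hne : u ≠ v)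
    (hadj : ¬G.Adj u v) : 2 ≤ G.edist u v := by
  have h : 1 < G.edist u v := by
    rw [← not_le, edist_le_one_iff_adj_or_eq]
    tauto
  exact Order.add_one_le_of_lt h

section LineGraphDistance

variable {V : Type*} {G : SimpleGraph V} {R : Set (Sym2 V)} {e f : Sym2 V}

lemma edistE_le_one_of_mem {v : V} (he : e ∈ G.edgeSet) (hf : f ∈ G.edgeSet) (hve : v ∈ e)
    (hvf : v ∈ f) : edistE G e f ≤ 1 := by
  rw [edistE, edist_le_one_iff_adj_or_eq, or_iff_not_imp_right]
  exact fun hne => ⟨hne, he, hf, v, hve, hvf⟩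

lemma edistSet_le_edistE (hf : f ∈ R) : edistSet G e R ≤ edistE G e f :=
  iInf₂_le f hf

lemma edistSet_le_edistE_add_edistSet :
    edistSet G e R ≤ edistE G e f + edistSet G f R := by
  rw [edistSet, edistSet, ENat.add_iInf₂]
  exact le_iInf₂ fun r hr => (edistSet_le_edistE hr).trans SimpleGraph.edist_triangle

lemma edistSet_le_edistSet_add_one_of_mem {v : V} (he : e ∈ G.edgeSet) (hf : f ∈ G.edgeSet)
    (hve : v ∈ e) (hvf : v ∈ f) : edistSet G e R ≤ edistSet G f R + 1 := by
  calc edistSet G e R ≤ edistE G e f + edistSet G f R := edistSet_le_edistE_add_edistSet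
    _ ≤ 1 + edistSet G f R := by gcongr; exact edistE_le_one_of_mem he hf hve hvf
    _ = edistSet G f R + 1 := add_comm _ _

lemma exists_edistE_eq_edistSet (hR : R.Nonempty) :
    ∃ f ∈ R, edistE G e f = edistSet G e R := by
  have : Nonempty R := hR.to_subtype
  obtain ⟨⟨f, hf⟩, hmin⟩ := ENat.exists_eq_iInf fun f : R => edistE G e f
  exact ⟨f, hf, hmin.trans (iInf_subtype'' R _)⟩

lemma exists_adj_edistSet_eq {k : ℕ} (h : edistSet G e R = (k + 1 : ℕ)) :
    ∃ g, (lineG G).Adj e g ∧ edistSet G g R = k := by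
  have hR : R.Nonempty := by
    by_contra hR
    simp [edistSet, Set.not_nonempty_iff_eq_empty.mp hR, eq_comm] at h
  obtain ⟨f, hfR, hef⟩ := exists_edistE_eq_edistSet (G := G) (e := e) hR
  obtain ⟨p, hp⟩ := exists_walk_of_edist_eq_coe (hef.trans h)
  cases p with
  | nil => simp at hp
  | @cons _ g _ hadj q =>
    refine ⟨g, hadj, le_antisymm ?_ ?_⟩
    · calc edistSet G g R ≤ edistE G g f := edistSet_le_edistE hfR
        _ ≤ q.length := edist_le q
        _ = k := by simpa using hp
    · obtain ⟨-, he, hg, v, hve, hvg⟩ := hadj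
      have := h ▸ edistSet_le_edistSet_add_one_of_mem (R := R) he hg hve hvg
      push_cast at this
      exact (ENat.add_le_add_iff_right ENat.one_ne_top).mp this

end LineGraphDistance

section Construction

variable {V : Type*} {G : SimpleGraph V} {R : Set (Sym2 V)} {Ei : ℕ → Set (Sym2 V)}
  {cand acc : V → Prop} {c a : V → Sym2 V} {candE I : Set (Sym2 V)}

lemma not_cand_of_acc (hEi : ∀ i : ℕ, Ei i = {e ∈ G.edgeSet | edistSet G e R = (i : ℕ∞)})
    (hcand : ∀ v : V, cand v ↔ (∃ g ∈ Ei 2, v ∈ g) ∧ (∃ h ∈ Ei 3, v ∈ h))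
    (hacc : ∀ u : V, acc u ↔ (∃ e ∈ candE, u ∈ e) ∧ (∃ f ∈ Ei 1, u ∈ f))
    {v : V} (hv : acc v) : ¬cand v := by
  intro hcv
  obtain ⟨-, h, hh, hvh⟩ := (hcand v).1 hcv
  obtain ⟨-, f, hf, hvf⟩ := (hacc v).1 hv
  rw [hEi] at hh hf
  have := edistSet_le_edistSet_add_one_of_mem (R := R) hh.1 hf.1 hvh hvf
  rw [hh.2, hf.2] at this
  norm_num at this

lemma eq_of_mem_of_mem_of_acc (hdisj : ∀ v, acc v → ¬cand v) (hc : ∀ v, cand v → v ∈ c v)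
    (ha : ∀ u, acc u → (∃ v, cand v ∧ c v = a u) ∧ u ∈ a u) {u₁ u₂ w : V} (hu₁ : acc u₁)
    (hu₂ : acc u₂) (hw₁ : w ∈ a u₁) (hw₂ : w ∈ a u₂) : a u₁ = a u₂ := by
  have endpoints : ∀ u, acc u → ∃ v, cand v ∧ c v = a u ∧ ∀ w ∈ a u, w = u ∨ w = v := by
    intro u hu
    obtain ⟨⟨v, hv, hcv⟩, hua⟩ := ha u hu
    have huv : u ≠ v := fun h => hdisj u hu (h ▸ hv)
    have hau : a u = s(u, v) := (Sym2.mem_and_mem_iff huv).1 ⟨hua, hcv ▸ hc v hv⟩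
    exact ⟨v, hv, hcv, fun w hw => by rwa [hau, Sym2.mem_iff] at hw⟩
  obtain ⟨v₁, hv₁, hc₁, hw₁⟩ := endpoints u₁ hu₁
  obtain ⟨v₂, hv₂, hc₂, hw₂⟩ := endpoints u₂ hu₂
  rcases hw₁ w ‹_› with rfl | rfl <;> rcases hw₂ _ ‹_› with h | h
  · rw [h]
  · exact absurd (h ▸ hv₂) (hdisj _ hu₁)
  · exact absurd (h ▸ hv₁) (hdisj _ hu₂)
  · rw [← hc₁, ← hc₂, h]

lemma two_le_edistE_of_acc
    (hEi : ∀ i : ℕ, Ei i = {e ∈ G.edgeSet | edistSet G e R = (i : ℕ∞)})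
    (hcand : ∀ v : V, cand v ↔ (∃ g ∈ Ei 2, v ∈ g) ∧ (∃ h ∈ Ei 3, v ∈ h))
    (hc : ∀ v : V, cand v → c v ∈ Ei 2 ∧ v ∈ c v)
    (hcandE : candE = {e : Sym2 V | ∃ v : V, cand v ∧ c v = e})
    (hacc : ∀ u : V, acc u ↔ (∃ e ∈ candE, u ∈ e) ∧ (∃ f ∈ Ei 1, u ∈ f))
    (ha : ∀ u : V, acc u → a u ∈ candE ∧ u ∈ a u)
    {u₁ u₂ : V} (hu₁ : acc u₁) (hu₂ : acc u₂) (hne : a u₁ ≠ a u₂) :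
    2 ≤ edistE G (a u₁) (a u₂) := by
  refine two_le_edist hne fun ⟨_, _, _, w, hw₁, hw₂⟩ => hne ?_
  refine eq_of_mem_of_mem_of_acc (fun _ => not_cand_of_acc hEi hcand hacc)
    (fun v hv => (hc v hv).2) (fun u hu => ⟨?_, (ha u hu).2⟩) hu₁ hu₂ hw₁ hw₂
  simpa [hcandE] using (ha u hu).1

lemma candE_subset_Ei_two (hc : ∀ v : V, cand v → c v ∈ Ei 2 ∧ v ∈ c v)
    (hcandE : candE = {e : Sym2 V | ∃ v : V, cand v ∧ c v = e}) : candE ⊆ Ei 2 := by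
  subst hcandE
  rintro _ ⟨v, hv, rfl⟩
  exact (hc v hv).1

lemma exists_mem_edistE_le_two_of_edistSet_eq_three
    (hEi : ∀ i : ℕ, Ei i = {e ∈ G.edgeSet | edistSet G e R = (i : ℕ∞)})
    (hcand : ∀ v : V, cand v ↔ (∃ g ∈ Ei 2, v ∈ g) ∧ (∃ h ∈ Ei 3, v ∈ h))
    (hc : ∀ v : V, cand v → c v ∈ Ei 2 ∧ v ∈ c v)
    (hcandE : candE = {e : Sym2 V | ∃ v : V, cand v ∧ c v = e})
    (hacc : ∀ u : V, acc u ↔ (∃ e ∈ candE, u ∈ e) ∧ (∃ f ∈ Ei 1, u ∈ f))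
    (ha : ∀ u : V, acc u → a u ∈ candE ∧ u ∈ a u)
    (hI : I = {e : Sym2 V | ∃ u : V, acc u ∧ a u = e})
    {e : Sym2 V} (he : e ∈ G.edgeSet) (he3 : edistSet G e R = (3 : ℕ)) :
    ∃ f ∈ I, edistE G e f ≤ 2 := by
  obtain ⟨g, ⟨-, -, hg, v, hve, hvg⟩, hg2⟩ := exists_adj_edistSet_eq (k := 2) he3
  have hv : cand v := (hcand v).2
    ⟨⟨g, by rw [hEi]; exact ⟨hg, hg2⟩, hvg⟩, ⟨e, by rw [hEi]; exact ⟨he, he3⟩, hve⟩⟩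
  obtain ⟨hcv2, hvcv⟩ := hc v hv
  rw [hEi] at hcv2
  obtain ⟨f, ⟨-, -, hf, u, hucv, huf⟩, hf1⟩ := exists_adj_edistSet_eq (k := 1) hcv2.2
  have hu : acc u := (hacc u).2
    ⟨⟨c v, by rw [hcandE]; exact ⟨v, hv, rfl⟩, hucv⟩, ⟨f, by rw [hEi]; exact ⟨hf, hf1⟩, huf⟩⟩
  obtain ⟨hau, huau⟩ := ha u hu
  have hau2 := candE_subset_Ei_two hc hcandE hau
  rw [hEi] at hau2
  refine ⟨a u, by rw [hI]; exact ⟨u, hu, rfl⟩, ?_⟩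
  calc edistE G e (a u) ≤ edistE G e (c v) + edistE G (c v) (a u) := SimpleGraph.edist_triangle
    _ ≤ 1 + 1 := add_le_add (edistE_le_one_of_mem he hcv2.1 hve hvcv)
        (edistE_le_one_of_mem hcv2.1 hau2.1 hucv huau)
    _ = 2 := one_add_one_eq_two

end Construction

theorem stmt5_general {V : Type*} (G : SimpleGraph V)
    (R : Set (Sym2 V)) (hR : IsRulingEdgeSet G 2 3 R)
    (Ei : ℕ → Set (Sym2 V))
    (hEi : ∀ i : ℕ, Ei i = {e ∈ G.edgeSet | edistSet G e R = (i : ℕ∞)})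
    (cand : V → Prop)
    (hcand : ∀ v : V, cand v ↔ (∃ g ∈ Ei 2, v ∈ g) ∧ (∃ h ∈ Ei 3, v ∈ h))
    (c : V → Sym2 V)
    (hc : ∀ v : V, cand v → c v ∈ Ei 2 ∧ v ∈ c v)
    (candE : Set (Sym2 V))
    (hcandE : candE = {e : Sym2 V | ∃ v : V, cand v ∧ c v = e})
    (acc : V → Prop)
    (hacc : ∀ u : V, acc u ↔ (∃ e ∈ candE, u ∈ e) ∧ (∃ f ∈ Ei 1, u ∈ f))
    (a : V → Sym2 V)
    (ha : ∀ u : V, acc u → a u ∈ candE ∧ u ∈ a u)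
    (I : Set (Sym2 V))
    (hI : I = {e : Sym2 V | ∃ u : V, acc u ∧ a u = e}) :
    IsRulingEdgeSet G 2 2 (R ∪ I) := by
  obtain ⟨hRsub, hRsep, hRdom⟩ := hR
  have hI2 : ∀ e ∈ I, e ∈ G.edgeSet ∧ edistSet G e R = (2 : ℕ) := by
    rw [hI]
    rintro _ ⟨u, hu, rfl⟩
    simpa [hEi] using candE_subset_Ei_two hc hcandE (ha u hu).1
  refine ⟨Set.union_subset hRsub fun e he => (hI2 e he).1, ?_, fun e he => ?_⟩
  · rintro e (he | he) f (hf | hf) hne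
    · exact hRsep e he f hf hne
    · exact (hI2 f hf).2 ▸ (edistSet_le_edistE he).trans_eq SimpleGraph.edist_comm
    · exact (hI2 e he).2 ▸ edistSet_le_edistE hf
    · rw [hI] at he hf
      obtain ⟨u₁, hu₁, rfl⟩ := he
      obtain ⟨u₂, hu₂, rfl⟩ := hf
      exact two_le_edistE_of_acc hEi hcand hc hcandE hacc ha hu₁ hu₂ hne
  · obtain ⟨f, hfR, hef⟩ := hRdom e he
    rcases ((edistSet_le_edistE hfR).trans hef).lt_or_eq with hlt | heq
    · obtain ⟨f', hf'R, hef'⟩ := exists_edistE_eq_edistSet (G := G) (e := e) ⟨f, hfR⟩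
      exact ⟨f', .inl hf'R, hef' ▸ Order.le_of_lt_add_one hlt⟩
    · obtain ⟨f', hf'I, hef'⟩ := exists_mem_edistE_le_two_of_edistSet_eq_three hEi hcand hc hcandE
        hacc ha hI he heq
      exact ⟨f', .inr hf'I, hef'⟩

/-- given a `3`-ruling edge set `R`, candidate edges are selected in `E₂`
by vertices incident to `E₂` and `E₃`, then accepted by vertices incident to a candidate
edge and to `E₁`; adding the accepted candidate edges `I` to `R` yields a `2`-ruling
edge set. -/
theorem stmt5 {V : Type*} [Fintype V] (G : SimpleGraph V)
    (R : Set (Sym2 V)) (hR : IsRulingEdgeSet G 2 3 R)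
    (Ei : ℕ → Set (Sym2 V))
    (hEi : ∀ i : ℕ, Ei i = {e ∈ G.edgeSet | edistSet G e R = (i : ℕ∞)})
    (cand : V → Prop)
    (hcand : ∀ v : V, cand v ↔ (∃ g ∈ Ei 2, v ∈ g) ∧ (∃ h ∈ Ei 3, v ∈ h))
    (c : V → Sym2 V)
    (hc : ∀ v : V, cand v → c v ∈ Ei 2 ∧ v ∈ c v)
    (candE : Set (Sym2 V))
    (hcandE : candE = {e : Sym2 V | ∃ v : V, cand v ∧ c v = e})
    (acc : V → Prop)
    (hacc : ∀ u : V, acc u ↔ (∃ e ∈ candE, u ∈ e) ∧ (∃ f ∈ Ei 1, u ∈ f))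
    (a : V → Sym2 V)
    (ha : ∀ u : V, acc u → a u ∈ candE ∧ u ∈ a u)
    (I : Set (Sym2 V))
    (hI : I = {e : Sym2 V | ∃ u : V, acc u ∧ a u = e}) :
    IsRulingEdgeSet G 2 2 (R ∪ I) :=
  stmt5_general G R hR Ei hEi cand hcand c hc candE hcandE acc hacc a ha I hI
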